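/- Let u be a freely reduced word in the letters A ∪ A^{-1} and let v be a (contiguous) subword of u. Then the simple (g+1)-length of v is at most the simple (g+1)-length of u, i.e. |v|_{g+1}^{simple} ≤ |u|_{g+1}^{simple}. -/

import Mathlib

/-- A letter of the alphabet `A ∪ A⁻¹`: a generator index together with a sign. -/
abbrev Letter (g : ℕ) := Fin g × Bool

/-- The formal inverse of a letter. -/
def Letter.inv {g : ℕ} (a : Letter g) : Letter g := (a.1, !a.2)

/-- A word is (freely) reduced if it equals its free reduction. -/
def IsReducedWord {g : ℕ} (w : List (Letter g)) : Prop :=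
  FreeGroup.reduce w = w

/-- The Whitehead graph of a word `x`: vertices are the letters `A ∪ A⁻¹`, and each
pair of consecutive letters `a b` occurring in `x` contributes an edge from `a` to `b⁻¹`. -/
def whiteheadGraph (g : ℕ) (x : List (Letter g)) : SimpleGraph (Letter g) where
  Adj u v := u ≠ v ∧ ([u, Letter.inv v] <:+: x ∨ [v, Letter.inv u] <:+: x)
  symm := by
    constructor
    intro u v h
    exact ⟨Ne.symm h.1, h.2.symm⟩
  loopless := by
    constructor
    intro u h
    exact h.1 rfl

/-- A graph has a cut vertex if it is disconnected, or some vertex can be removed to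
disconnect it. -/
def HasCutVertex {V : Type*} (G : SimpleGraph V) : Prop :=
  ¬ G.Connected ∨ ∃ v : V, ¬ (G.induce {u | u ≠ v}).Connected

/-- The simple `(g+1)`-length of a reduced word `w`: it is `0` if the Whitehead graph of
`w` has a cut vertex, and otherwise the greatest `t` such that `w` is a concatenation of
`t` subwords each of whose Whitehead graphs has no cut vertex. -/
noncomputable def simpleLength (g : ℕ) (w : List (Letter g)) : ℕ :=
  letI := Classical.propDecidable (HasCutVertex (whiteheadGraph g w))
  if HasCutVertex (whiteheadGraph g w) then 0
  else sSup {t : ℕ | ∃ ws : List (List (Letter g)),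
    ws.length = t ∧ ws.flatten = w ∧
    ∀ u ∈ ws, ¬ HasCutVertex (whiteheadGraph g u)}

/-!
A splitting of `v` into pieces whose Whitehead graphs have no cut vertex extends to one of
`u = p ++ v ++ s` with the same number of pieces: glue `p` onto the first piece and `s` onto the
last. This works because the Whitehead graph only grows under passing to a superword, and adding
edges cannot create a cut vertex. The supremum for `u` is finite since pieces are nonempty: the
empty word has an edgeless Whitehead graph on at least two vertices.
-/

section Splitting

variable {α : Type*} (P : List α → Prop)

def splittingLengths (w : List α) : Set ℕ :=
  {t | ∃ ws : List (List α), ws.length = t ∧ ws.flatten = w ∧ ∀ x ∈ ws, P x}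

variable {P}

theorem one_mem_splittingLengths {w : List α} (hw : P w) : 1 ∈ splittingLengths P w :=
  ⟨[w], rfl, by simp, by simpa using hw⟩

theorem bddAbove_splittingLengths (hP : ¬ P []) (w : List α) :
    BddAbove (splittingLengths P w) := by
  refine ⟨w.length, ?_⟩
  rintro t ⟨ws, rfl, rfl, hws⟩
  rw [List.length_flatten]
  simpa using List.length_le_sum_of_one_le (ws.map List.length) (by
    simp only [List.mem_map, forall_exists_index, and_imp]
    rintro _ x hx rfl
    exact List.length_pos_iff.mpr (fun h => hP (h ▸ hws x hx)))

theorem splittingLengths_subset_append_left (hP : ∀ p x, P x → P (p ++ x)) {w : List α}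
    (hw : w ≠ []) (p : List α) : splittingLengths P w ⊆ splittingLengths P (p ++ w) := by
  rintro t ⟨_ | ⟨x, ws⟩, rfl, rfl, hws⟩
  · exact absurd rfl hw
  · refine ⟨(p ++ x) :: ws, rfl, by simp, ?_⟩
    simp only [List.mem_cons, forall_eq_or_imp] at hws ⊢
    exact ⟨hP p x hws.1, hws.2⟩

theorem splittingLengths_subset_append_right (hP : ∀ x s, P x → P (x ++ s)) {w : List α}
    (hw : w ≠ []) (s : List α) : splittingLengths P w ⊆ splittingLengths P (w ++ s) := by
  rintro t ⟨ws, rfl, rfl, hws⟩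
  have hne : ws ≠ [] := by rintro rfl; exact hw rfl
  refine ⟨ws.dropLast ++ [ws.getLast hne ++ s], ?_, ?_, ?_⟩
  · simp [Nat.sub_add_cancel (List.length_pos_iff.mpr hne)]
  · conv_rhs => rw [← List.dropLast_append_getLast hne]
    simp
  · simp only [List.mem_append, List.mem_singleton]
    rintro x (hx | rfl)
    · exact hws x (List.mem_of_mem_dropLast hx)
    · exact hP _ s (hws _ (List.getLast_mem hne))

theorem splittingLengths_subset_of_isInfix (hP : ∀ x y, x <:+: y → P x → P y) {v u : List α}
    (hv : v <:+: u) (hv₀ : v ≠ []) : splittingLengths P v ⊆ splittingLengths P u := by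
  obtain ⟨p, s, rfl⟩ := hv
  refine (splittingLengths_subset_append_left (fun p x => hP _ _ (List.suffix_append p x).isInfix)
    hv₀ p).trans ?_
  exact splittingLengths_subset_append_right (fun x s => hP _ _ (List.prefix_append x s).isInfix)
    (by simp [hv₀]) s

end Splitting

theorem not_hasCutVertex_mono {V : Type*} {G H : SimpleGraph V} (hle : G ≤ H)
    (hG : ¬ HasCutVertex G) : ¬ HasCutVertex H := by
  simp only [HasCutVertex, not_or, not_exists, not_not] at hG ⊢
  exact ⟨hG.1.mono hle, fun v => (hG.2 v).mono fun _ _ hab => hle hab⟩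

theorem whiteheadGraph_mono {g : ℕ} {x y : List (Letter g)} (h : x <:+: y) :
    whiteheadGraph g x ≤ whiteheadGraph g y :=
  fun _ _ ⟨hne, hxy⟩ => ⟨hne, hxy.imp (·.trans h) (·.trans h)⟩

theorem not_hasCutVertex_whiteheadGraph_of_isInfix {g : ℕ} {x y : List (Letter g)}
    (h : x <:+: y) (hx : ¬ HasCutVertex (whiteheadGraph g x)) :
    ¬ HasCutVertex (whiteheadGraph g y) :=
  not_hasCutVertex_mono (whiteheadGraph_mono h) hx

theorem hasCutVertex_whiteheadGraph_nil {g : ℕ} (hg : 0 < g) :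
    HasCutVertex (whiteheadGraph g []) := by
  refine Or.inl fun h => ?_
  obtain ⟨w⟩ := h.preconnected (⟨0, hg⟩, true) (⟨0, hg⟩, false)
  cases w with
  | cons hadj _ => obtain ⟨-, h | h⟩ := hadj <;> simpa using h.sublist.length_le

theorem simpleLength_le_of_isInfix_general (g : ℕ) (hg : 2 ≤ g)
    (u v : List (Letter g)) (hv : v <:+: u) :
    simpleLength g v ≤ simpleLength g u := by
  by_cases hcv : HasCutVertex (whiteheadGraph g v)
  · simp [simpleLength, hcv]
  have hcu := not_hasCutVertex_whiteheadGraph_of_isInfix hv hcv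
  have hnil := hasCutVertex_whiteheadGraph_nil (g := g) (by omega)
  have hv₀ : v ≠ [] := by rintro rfl; exact hcv hnil
  rw [simpleLength, simpleLength, if_neg hcv, if_neg hcu]
  exact csSup_le_csSup (bddAbove_splittingLengths (not_not_intro hnil) u)
    ⟨1, one_mem_splittingLengths hcv⟩
    (splittingLengths_subset_of_isInfix
      (fun _ _ => not_hasCutVertex_whiteheadGraph_of_isInfix) hv hv₀)

/-- If `u` is a freely reduced word and `v` is a contiguous subword of `u`, then the simple
`(g+1)`-length of `v` is at most that of `u`. -/
theorem simpleLength_le_of_isInfix (g : ℕ) (hg : 2 ≤ g)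
    (u v : List (Letter g)) (hu : IsReducedWord u) (hv : v <:+: u) :
    simpleLength g v ≤ simpleLength g u :=
  simpleLength_le_of_isInfix_general g hg u v hv
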